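/- Let A be a finite von Neumann algebra with no type I_2 summand acting on a separable Hilbert space, and let μ : A^pr → [0,+∞] be a σ-finite infinite measure. Then the restriction of μ to M_μ = {p : μ(p) < ∞} is a closed measure: for any p ∈ A^pr, if every subprojection q ≤ p is a projection of finite μ-measure, then μ(p) < ∞. -/

import Mathlib

open LinearMap Filter Topology ENNReal

section Preamble

variable {H : Type} [NormedAddCommGroup H] [InnerProductSpace ℂ H] [CompleteSpace H]

/-- An orthogonal projection: a self-adjoint idempotent bounded operator. -/
def IsProjOp (p : H →L[ℂ] H) : Prop := IsIdempotentElem p ∧ IsSelfAdjoint p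

/-- The orthogonal projection onto the closure of a submodule. -/
noncomputable def sProj (K : Submodule ℂ H) : H →L[ℂ] H :=
  haveI : CompleteSpace K.topologicalClosure :=
    K.isClosed_topologicalClosure.completeSpace_coe
  K.topologicalClosure.subtypeL.comp (Submodule.orthogonalProjectionOnto K.topologicalClosure)

/-- `p ∨ q`: projection onto the closed span of the ranges. -/
noncomputable def pSup (p q : H →L[ℂ] H) : H →L[ℂ] H :=
  sProj (LinearMap.range (p : H →ₗ[ℂ] H) ⊔ LinearMap.range (q : H →ₗ[ℂ] H))

/-- `p ∧ q`: projection onto the intersection of the ranges. -/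
noncomputable def pInf (p q : H →L[ℂ] H) : H →L[ℂ] H :=
  sProj (LinearMap.range (p : H →ₗ[ℂ] H) ⊓ LinearMap.range (q : H →ₗ[ℂ] H))

/-- Supremum of a family of projections. -/
noncomputable def pSupFam {ι : Type} (q : ι → H →L[ℂ] H) : H →L[ℂ] H :=
  sProj (⨆ i, LinearMap.range (q i : H →ₗ[ℂ] H))

/-- Order on projections via ranges. -/
def pLe (p q : H →L[ℂ] H) : Prop := LinearMap.range (p : H →ₗ[ℂ] H) ≤ LinearMap.range (q : H →ₗ[ℂ] H)

/-- `r n ↗ rl`: increasing sequence of projections with supremum `rl`. -/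
def AscendsTo (r : ℕ → H →L[ℂ] H) (rl : H →L[ℂ] H) : Prop :=
  (∀ n, pLe (r n) (r (n + 1))) ∧ (∀ n, pLe (r n) rl) ∧
    (⨆ n, LinearMap.range (r n : H →ₗ[ℂ] H)).topologicalClosure = LinearMap.range (rl : H →ₗ[ℂ] H)

/-- The set of orthogonal projections belonging to a von Neumann algebra. -/
def projSet (A : VonNeumannAlgebra H) : Set (H →L[ℂ] H) :=
  {p | p ∈ A ∧ IsProjOp p}

/-- An ideal of projections inside the projection lattice of `A`. -/
structure IsIdealOfProj (A : VonNeumannAlgebra H) (M : Set (H →L[ℂ] H)) : Prop where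
  subset : M ⊆ projSet A
  downward : ∀ p q, p ∈ projSet A → q ∈ M → pLe p q → p ∈ M
  supClosed : ∀ p ∈ M, ∀ q ∈ M, ‖p * q‖ < 1 → pSup p q ∈ M
  total : (⨆ p ∈ M, LinearMap.range (p : H →ₗ[ℂ] H)).topologicalClosure = ⊤

/-- Murray–von Neumann equivalence of projections in `A`. -/
def MvNEquiv (A : VonNeumannAlgebra H) (p q : H →L[ℂ] H) : Prop :=
  ∃ u, u ∈ A ∧ star u * u = p ∧ u * star u = q

/-- A projection `p` of `A` is finite. -/
def IsFiniteProjIn (A : VonNeumannAlgebra H) (p : H →L[ℂ] H) : Prop :=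
  ∀ q, q ∈ projSet A → pLe q p → MvNEquiv A p q → q = p

/-- `A` is a finite von Neumann algebra. -/
def IsFiniteVN (A : VonNeumannAlgebra H) : Prop := IsFiniteProjIn A 1

/-- `A` is a semifinite von Neumann algebra. -/
def IsSemifiniteVN (A : VonNeumannAlgebra H) : Prop :=
  ∀ p ∈ projSet A, p ≠ 0 → ∃ q ∈ projSet A, q ≠ 0 ∧ pLe q p ∧ IsFiniteProjIn A q

/-- An abelian projection of `A`. -/
def IsAbelianProjIn (A : VonNeumannAlgebra H) (e : H →L[ℂ] H) : Prop :=
  e ∈ projSet A ∧ ∀ a ∈ A, ∀ b ∈ A, (e * a * e) * (e * b * e) = (e * b * e) * (e * a * e)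

/-- `A` has a direct summand of type I₂. -/
def HasTypeI2Summand (A : VonNeumannAlgebra H) : Prop :=
  ∃ z e₁ e₂ : H →L[ℂ] H, z ∈ projSet A ∧ z ≠ 0 ∧ (∀ a ∈ A, z * a = a * z) ∧
    IsAbelianProjIn A e₁ ∧ IsAbelianProjIn A e₂ ∧ e₁ * e₂ = 0 ∧ e₁ + e₂ = z ∧
    MvNEquiv A e₁ e₂

/-- `μ` is a (completely additive) measure on a set `P` of projections. -/
def IsMeasureOn (P : Set (H →L[ℂ] H)) (μ : (H →L[ℂ] H) → ℝ≥0∞) : Prop :=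
  ∀ (ι : Type) (e : ι → H →L[ℂ] H) (f : H →L[ℂ] H),
    (∀ i, e i ∈ P) → f ∈ P → (Pairwise fun i j => e i * e j = 0) →
    f = pSupFam e → μ f = ∑' i, μ (e i)

/-- `μ` is a σ-finite measure on the projections of `A`. -/
def IsSigmaFinite (A : VonNeumannAlgebra H) (μ : (H →L[ℂ] H) → ℝ≥0∞) : Prop :=
  ∃ p : ℕ → H →L[ℂ] H, (∀ n, p n ∈ projSet A) ∧ AscendsTo p 1 ∧ ∀ n, μ (p n) < ⊤

/-- `p` is a projection of finite `μ`-measure relative to the family `M`. -/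
def FinMeasProjOn (M : Set (H →L[ℂ] H)) (μ : (H →L[ℂ] H) → ℝ≥0∞)
    (p : H →L[ℂ] H) : Prop :=
  (⨆ q ∈ {q | q ∈ M ∧ pLe q p ∧ μ q < ⊤}, LinearMap.range (q : H →ₗ[ℂ] H)).topologicalClosure
      = LinearMap.range (p : H →ₗ[ℂ] H) ∧
    (⨆ q ∈ {q | q ∈ M ∧ pLe q p ∧ μ q < ⊤}, μ q) < ⊤

/-- A faithful normal finite trace on `A` (the properties of it that we use). -/
structure IsFNFiniteTrace (A : VonNeumannAlgebra H) (τ : (H →L[ℂ] H) → ℝ) : Prop where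
  add : ∀ a b, τ (a + b) = τ a + τ b
  tracial : ∀ a b, τ (a * b) = τ (b * a)
  nonneg : ∀ a, 0 ≤ τ (star a * a)
  faithful : ∀ p, p ∈ projSet A → τ p = 0 → p = 0
  normal : ∀ (r : ℕ → H →L[ℂ] H) (rl : H →L[ℂ] H), (∀ n, r n ∈ projSet A) →
    rl ∈ projSet A → AscendsTo r rl →
    Tendsto (fun n => τ (r n)) atTop (nhds (τ rl))

end Preamble


open ContinuousLinearMap

section Projections

variable {H : Type} [NormedAddCommGroup H] [InnerProductSpace ℂ H]

lemma pLe_iff_mul_eq_right {p q : H →L[ℂ] H} (hp : IsIdempotentElem p) :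
    pLe q p ↔ p * q = q := by
  rw [pLe, ← LinearMap.IsIdempotentElem.comp_eq_right_iff hp.toLinearMap,
    ← toLinearMap_comp, ContinuousLinearMap.coe_inj, mul_def]

lemma sum_pLe {ι : Type} {e : ι → H →L[ℂ] H} {p : H →L[ℂ] H} (hp : IsIdempotentElem p)
    (s : Finset ι) (he : ∀ i ∈ s, pLe (e i) p) : pLe (∑ i ∈ s, e i) p := by
  rw [pLe_iff_mul_eq_right hp, Finset.mul_sum]
  exact Finset.sum_congr rfl fun i hi => (pLe_iff_mul_eq_right hp).1 (he i hi)

variable [CompleteSpace H]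

lemma isProjOp_iff_isStarProjection {p : H →L[ℂ] H} : IsProjOp p ↔ IsStarProjection p :=
  (isStarProjection_iff p).symm

lemma mul_eq_zero_symm {e f : H →L[ℂ] H} (he : IsStarProjection e) (hf : IsStarProjection f)
    (h : e * f = 0) : f * e = 0 := by
  simpa [he.isSelfAdjoint.star_eq, hf.isSelfAdjoint.star_eq] using congr(star $h)

lemma mul_eq_left_of_pLe {p q : H →L[ℂ] H} (hp : IsStarProjection p) (hq : IsStarProjection q)
    (h : pLe q p) : q * p = q := by
  simpa [hp.isSelfAdjoint.star_eq, hq.isSelfAdjoint.star_eq] using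
    congr(star $((pLe_iff_mul_eq_right hp.isIdempotentElem).1 h))

lemma isStarProjection_sProj (K : Submodule ℂ H) : IsStarProjection (sProj K) :=
  haveI : CompleteSpace K.topologicalClosure := K.isClosed_topologicalClosure.completeSpace_coe
  isStarProjection_starProjection

lemma range_sProj (K : Submodule ℂ H) : (sProj K).range = K.topologicalClosure :=
  haveI : CompleteSpace K.topologicalClosure := K.isClosed_topologicalClosure.completeSpace_coe
  Submodule.range_starProjection _

lemma sProj_eq_of_topologicalClosure_eq {K : Submodule ℂ H} {f : H →L[ℂ] H}
    (hf : IsStarProjection f) (h : K.topologicalClosure = f.range) : sProj K = f :=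
  ContinuousLinearMap.IsStarProjection.ext (isStarProjection_sProj K) hf ((range_sProj K).trans h)

lemma range_add_of_mul_eq_zero {e f : H →L[ℂ] H} (he : IsStarProjection e)
    (hf : IsStarProjection f) (h : e * f = 0) : (e + f).range = e.range ⊔ f.range := by
  have hef := he.add hf h
  refine le_antisymm (LinearMap.range_add_le _ _) (sup_le ?_ ?_)
  · refine (pLe_iff_mul_eq_right hef.isIdempotentElem).2 ?_
    rw [add_mul, he.isIdempotentElem.eq, mul_eq_zero_symm he hf h, add_zero]
  · refine (pLe_iff_mul_eq_right hef.isIdempotentElem).2 ?_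
    rw [add_mul, hf.isIdempotentElem.eq, h, zero_add]

lemma pLe_pSupFam {ι : Type} (e : ι → H →L[ℂ] H) (i : ι) : pLe (e i) (pSupFam e) := by
  rw [pLe, pSupFam, range_sProj]
  exact (le_iSup (fun i => (e i).range) i).trans (Submodule.le_topologicalClosure _)

lemma pSupFam_pLe {ι : Type} {e : ι → H →L[ℂ] H} {p : H →L[ℂ] H} (hp : IsIdempotentElem p)
    (he : ∀ i, pLe (e i) p) : pLe (pSupFam e) p := by
  rw [pLe, pSupFam, range_sProj]
  exact Submodule.topologicalClosure_minimal _ (iSup_le he) (IsIdempotentElem.isClosed_range hp)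

end Projections

section VonNeumannAlgebra

variable {H : Type} [NormedAddCommGroup H] [InnerProductSpace ℂ H] [CompleteSpace H]
  {A : VonNeumannAlgebra H}

lemma range_mem_invtSubmodule_of_mem_commutant {a y : H →L[ℂ] H} (ha : a ∈ A)
    (hy : y ∈ A.commutant) : a.range ∈ Module.End.invtSubmodule (y : H →ₗ[ℂ] H) := by
  rintro _ ⟨x, rfl⟩
  exact ⟨y x, congr($(VonNeumannAlgebra.mem_commutant_iff.1 hy a ha) x)⟩

lemma sProj_mem {K : Submodule ℂ H}
    (hK : ∀ y ∈ A.commutant, K ∈ Module.End.invtSubmodule (y : H →ₗ[ℂ] H)) : sProj K ∈ A := by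
  rw [VonNeumannAlgebra.IsStarProjection.mem_iff (isStarProjection_sProj K)]
  intro y hy
  rw [range_sProj]
  exact Submodule.topologicalClosure_mem_invtSubmodule (hK y hy)

lemma pSupFam_mem {ι : Type} {e : ι → H →L[ℂ] H} (he : ∀ i, e i ∈ A) : pSupFam e ∈ A :=
  sProj_mem fun _ hy => iSup_le fun i =>
    (range_mem_invtSubmodule_of_mem_commutant (he i) hy).trans
      (Submodule.comap_mono (le_iSup (fun i => (e i).range) i))

lemma isStarProjection_of_mem_projSet {p : H →L[ℂ] H} (hp : p ∈ projSet A) :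
    IsStarProjection p :=
  isProjOp_iff_isStarProjection.1 hp.2

variable (A) in
lemma zero_mem_projSet : (0 : H →L[ℂ] H) ∈ projSet A :=
  ⟨zero_mem A, isProjOp_iff_isStarProjection.2 (IsStarProjection.zero _)⟩

lemma add_mem_projSet {e f : H →L[ℂ] H} (he : e ∈ projSet A) (hf : f ∈ projSet A)
    (h : e * f = 0) : e + f ∈ projSet A :=
  ⟨add_mem he.1 hf.1, isProjOp_iff_isStarProjection.2 <|
    (isStarProjection_of_mem_projSet he).add (isStarProjection_of_mem_projSet hf) h⟩

lemma sum_mem_projSet {ι : Type} {e : ι → H →L[ℂ] H} (he : ∀ i, e i ∈ projSet A)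
    (horth : Pairwise fun i j => e i * e j = 0) (s : Finset ι) : ∑ i ∈ s, e i ∈ projSet A := by
  classical
  induction s using Finset.induction_on with
  | empty => exact zero_mem_projSet A
  | insert a s ha ih =>
    rw [Finset.sum_insert ha]
    refine add_mem_projSet (he a) ih ?_
    rw [Finset.mul_sum]
    exact Finset.sum_eq_zero fun j hj => horth (ne_of_mem_of_not_mem hj ha).symm

end VonNeumannAlgebra

namespace IsMeasureOn

variable {H : Type} [NormedAddCommGroup H] [InnerProductSpace ℂ H] [CompleteSpace H]
  {A : VonNeumannAlgebra H} {μ : (H →L[ℂ] H) → ℝ≥0∞}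

lemma map_zero (hμ : IsMeasureOn (projSet A) μ) : μ 0 = 0 := by
  have h0 : (0 : H →L[ℂ] H) = pSupFam fun i : Empty => i.elim := by
    refine (sProj_eq_of_topologicalClosure_eq (IsStarProjection.zero _) ?_).symm
    rw [iSup_of_empty, Submodule.topologicalClosure_eq_self]
    simp
  simpa using hμ Empty _ 0 (fun i => i.elim) (zero_mem_projSet A) (fun i => i.elim) h0

lemma map_add (hμ : IsMeasureOn (projSet A) μ) {e f : H →L[ℂ] H} (he : e ∈ projSet A)
    (hf : f ∈ projSet A) (h : e * f = 0) : μ (e + f) = μ e + μ f := by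
  have he' := isStarProjection_of_mem_projSet he
  have hf' := isStarProjection_of_mem_projSet hf
  have hpair : Pairwise fun b c : Bool => cond b e f * cond c e f = 0 := by
    rintro (_ | _) (_ | _) hbc
    exacts [absurd rfl hbc, mul_eq_zero_symm he' hf' h, h, absurd rfl hbc]
  have hsup : e + f = pSupFam fun b => cond b e f := by
    refine (sProj_eq_of_topologicalClosure_eq (he'.add hf' h) ?_).symm
    rw [iSup_bool_eq]
    simp only [cond_true, cond_false]
    rw [← range_add_of_mul_eq_zero he' hf' h,
      (IsIdempotentElem.isClosed_range (he'.add hf' h).isIdempotentElem).submodule_topologicalClosure_eq]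
  rw [hμ Bool _ _ (by rintro (_ | _) <;> assumption) (add_mem_projSet he hf h) hpair hsup,
    tsum_bool, add_comm]
  rfl

lemma map_sum (hμ : IsMeasureOn (projSet A) μ) {ι : Type} {e : ι → H →L[ℂ] H}
    (he : ∀ i, e i ∈ projSet A) (horth : Pairwise fun i j => e i * e j = 0) (s : Finset ι) :
    μ (∑ i ∈ s, e i) = ∑ i ∈ s, μ (e i) := by
  classical
  induction s using Finset.induction_on with
  | empty => simpa using hμ.map_zero
  | insert a s ha ih =>
    rw [Finset.sum_insert ha, Finset.sum_insert ha, ← ih]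
    refine hμ.map_add (he a) (sum_mem_projSet he horth s) ?_
    rw [Finset.mul_sum]
    exact Finset.sum_eq_zero fun j hj => horth (ne_of_mem_of_not_mem hj ha).symm

lemma eq_iSup_sum (hμ : IsMeasureOn (projSet A) μ) {ι : Type} {e : ι → H →L[ℂ] H}
    (he : ∀ i, e i ∈ projSet A) (horth : Pairwise fun i j => e i * e j = 0) {p : H →L[ℂ] H}
    (hp : p ∈ projSet A) (hpe : p = pSupFam e) :
    μ p = ⨆ s : Finset ι, μ (∑ i ∈ s, e i) := by
  simp_rw [hμ ι e p he hp horth hpe, ENNReal.tsum_eq_iSup_sum, hμ.map_sum he horth]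

end IsMeasureOn

lemma FinMeasProjOn.exists_ne_zero {H : Type} [NormedAddCommGroup H] [InnerProductSpace ℂ H]
    {M : Set (H →L[ℂ] H)} {μ : (H →L[ℂ] H) → ℝ≥0∞} {r : H →L[ℂ] H} (h : FinMeasProjOn M μ r)
    (hr : r ≠ 0) : ∃ q ∈ M, pLe q r ∧ q ≠ 0 := by
  by_contra! hM
  have hbot : (⨆ q ∈ {q | q ∈ M ∧ pLe q r ∧ μ q < ⊤}, (q : H →ₗ[ℂ] H).range) = ⊥ :=
    iSup₂_eq_bot.2 fun q hq => by simp [hM q hq.1 hq.2.1]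
  have hrange := h.1
  rw [hbot, Submodule.topologicalClosure_eq_self, eq_comm, LinearMap.range_eq_bot] at hrange
  exact hr (ContinuousLinearMap.coe_inj.1 hrange)

section OrthogonalFamilies

variable {H : Type} [NormedAddCommGroup H] [InnerProductSpace ℂ H]

def IsOrthogonalFamilyBelow (M : Set (H →L[ℂ] H)) (p : H →L[ℂ] H) (T : Set (H →L[ℂ] H)) :
    Prop :=
  T ⊆ M ∧ (∀ q ∈ T, pLe q p) ∧ T.Pairwise fun a b => a * b = 0

lemma exists_maximal_isOrthogonalFamilyBelow (M : Set (H →L[ℂ] H)) (p : H →L[ℂ] H) :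
    ∃ T, Maximal (IsOrthogonalFamilyBelow M p) T := by
  refine zorn_subset _ fun c hc hchain => ⟨⋃₀ c, ⟨?_, ?_, ?_⟩, fun s => Set.subset_sUnion_of_mem⟩
  · exact Set.sUnion_subset fun T hT => (hc hT).1
  · exact fun q ⟨T, hT, hqT⟩ => (hc hT).2.1 q hqT
  · exact (Set.pairwise_sUnion hchain.directedOn).2 fun T hT => (hc hT).2.2

variable [CompleteSpace H]

lemma Maximal.eq_pSupFam {A : VonNeumannAlgebra H} {M : Set (H →L[ℂ] H)} {p : H →L[ℂ] H}
    {T : Set (H →L[ℂ] H)} (hT : Maximal (IsOrthogonalFamilyBelow M p) T) (hM : M ⊆ projSet A)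
    (hp : p ∈ projSet A)
    (hM_dense : ∀ r ∈ projSet A, pLe r p → r ≠ 0 → ∃ q ∈ M, pLe q r ∧ q ≠ 0) :
    p = pSupFam fun i : T => (i : H →L[ℂ] H) := by
  obtain ⟨⟨hTM, hTp, hTorth⟩, hTmax⟩ := hT
  set f := pSupFam fun i : T => (i : H →L[ℂ] H)
  have hp' := isStarProjection_of_mem_projSet hp
  have hf : IsStarProjection f := isStarProjection_sProj _
  have hfp : pLe f p := pSupFam_pLe hp'.isIdempotentElem fun i => hTp i i.2
  have hr : IsStarProjection (p - f) := hf.sub_of_mul_eq_left hp' (mul_eq_left_of_pLe hp' hf hfp)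
  have hrp : pLe (p - f) p := by
    rw [pLe_iff_mul_eq_right hp'.isIdempotentElem, mul_sub, hp'.isIdempotentElem.eq,
      (pLe_iff_mul_eq_right hp'.isIdempotentElem).1 hfp]
  have hfr : f * (p - f) = 0 := by
    rw [mul_sub, mul_eq_left_of_pLe hp' hf hfp, hf.isIdempotentElem.eq, sub_self]
  by_contra hne
  obtain ⟨q, hqM, hqr, hq0⟩ := hM_dense (p - f)
    ⟨sub_mem hp.1 (pSupFam_mem fun i => (hM (hTM i.2)).1), isProjOp_iff_isStarProjection.2 hr⟩
    hrp (sub_ne_zero.2 hne)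
  have hq := isStarProjection_of_mem_projSet (hM hqM)
  -- `q ≤ p - f ⊥ f ≥ e` for every `e ∈ T`
  have hTq : ∀ e ∈ T, e * q = 0 := fun e heT => by
    have he := isStarProjection_of_mem_projSet (hM (hTM heT))
    rw [← mul_eq_left_of_pLe hf he (pLe_pSupFam (fun i : T => (i : H →L[ℂ] H)) ⟨e, heT⟩),
      ← (pLe_iff_mul_eq_right hr.isIdempotentElem).1 hqr, mul_assoc, ← mul_assoc f, hfr,
      zero_mul, mul_zero]
  have hqT : q ∉ T := fun h => hq0 (hq.isIdempotentElem.eq ▸ hTq q h)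
  refine hqT (hTmax ⟨Set.insert_subset hqM hTM, ?_, ?_⟩ (Set.subset_insert q T) (Set.mem_insert q T))
  · exact Set.forall_mem_insert.2 ⟨le_trans hqr hrp, hTp⟩
  · refine Set.pairwise_insert.2 ⟨hTorth, fun e he _ => ⟨?_, hTq e he⟩⟩
    exact mul_eq_zero_symm (isStarProjection_of_mem_projSet (hM (hTM he))) hq (hTq e he)

end OrthogonalFamilies

theorem stmt10_general {H : Type} [NormedAddCommGroup H] [InnerProductSpace ℂ H] [CompleteSpace H]
    (A : VonNeumannAlgebra H)
    (μ : (H →L[ℂ] H) → ℝ≥0∞) (hμ : IsMeasureOn (projSet A) μ)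
    (p : H →L[ℂ] H) (hp : p ∈ projSet A)
    (hher : ∀ q ∈ projSet A, pLe q p →
      FinMeasProjOn {r | r ∈ projSet A ∧ μ r < ⊤} μ q) :
    μ p < ⊤ := by
  obtain ⟨-, hbound⟩ := hher p hp le_rfl
  obtain ⟨T, hT⟩ := exists_maximal_isOrthogonalFamilyBelow {r | r ∈ projSet A ∧ μ r < ⊤} p
  obtain ⟨hTM, hTp, hTorth⟩ := hT.prop
  have hpT := hT.eq_pSupFam (fun r hr => hr.1) hp fun r hr hrp hr0 =>
    (hher r hr hrp).exists_ne_zero hr0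
  have horth : Pairwise fun i j : T => (i : H →L[ℂ] H) * j = 0 := fun i j hij =>
    hTorth i.2 j.2 (Subtype.coe_injective.ne hij)
  have he : ∀ i : T, (i : H →L[ℂ] H) ∈ projSet A := fun i => (hTM i.2).1
  rw [hμ.eq_iSup_sum he horth hp hpT]
  refine (iSup_le fun s => ?_).trans_lt hbound
  have hs : μ (∑ i ∈ s, (i : H →L[ℂ] H)) < ⊤ := by
    rw [hμ.map_sum he horth]
    exact ENNReal.sum_lt_top.2 fun i _ => (hTM i.2).2
  refine le_iSup₂_of_le (∑ i ∈ s, (i : H →L[ℂ] H)) ⟨⟨sum_mem_projSet he horth s, hs⟩,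
    sum_pLe (isStarProjection_of_mem_projSet hp).isIdempotentElem s fun i _ => hTp i i.2, hs⟩ le_rfl

/-- the restriction of a σ-finite infinite measure on a finite von Neumann
algebra (no type I₂ summand, separable space) to `M_μ` is closed: any hereditary
projection of finite `μ`-measure has `μ p < ∞`. -/
theorem stmt10 {H : Type} [NormedAddCommGroup H] [InnerProductSpace ℂ H] [CompleteSpace H]
    [TopologicalSpace.SeparableSpace H]
    (A : VonNeumannAlgebra H) (hfin : IsFiniteVN A) (hI2 : ¬ HasTypeI2Summand A)
    (μ : (H →L[ℂ] H) → ℝ≥0∞) (hμ : IsMeasureOn (projSet A) μ)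
    (hσ : IsSigmaFinite A μ) (hinf : ∃ p ∈ projSet A, μ p = ⊤)
    (p : H →L[ℂ] H) (hp : p ∈ projSet A)
    (hher : ∀ q ∈ projSet A, pLe q p →
      FinMeasProjOn {r | r ∈ projSet A ∧ μ r < ⊤} μ q) :
    μ p < ⊤ :=
  stmt10_general A μ hμ p hp hher
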